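/- Let \u03b1\u2081, \u2026, \u03b1\u2088 \u2208 \u2102 be the roots, counted with multiplicity, of h = X\u2078 + 2X\u2077 + 2X\u2076 \u2212 4X\u2074 + 8X\u00b2 + 16X + 16. Then \u220f_{i=1}^{8} (X \u2212 \u03b1\u1d62\u2074) = (X\u2074 \u2212 4X\u00b3 + 16X\u00b2 \u2212 64X + 256)\u00b2 in \u2102[X], and the polynomial X\u2074 \u2212 4X\u00b3 + 16X\u00b2 \u2212 64X + 256 is irreducible in \u211a[X]. -/

import Mathlib

/-!
Graeffe's root-squaring: if `p = ∏ (X - a)` has `n` roots, then `∏ (X - a²)` evaluated at `X²` is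
`(-1)ⁿ p(X) p(-X)`, and since `q ↦ q(X²)` is injective this determines `∏ (X - a²)`. Applying it
twice to `h` gives the product over the fourth powers of the roots. Under `X ↦ -4X` the quartic
becomes `256 Φ₅`, which is irreducible over `ℚ`.
-/

open Polynomial

/-- The Weil 2-polynomial `h = X⁸ + 2X⁷ + 2X⁶ − 4X⁴ + 8X² + 16X + 16`, over `ℂ`. -/
noncomputable def weilH : Polynomial ℂ :=
  X ^ 8 + 2 * X ^ 7 + 2 * X ^ 6 - 4 * X ^ 4 + 8 * X ^ 2 + 16 * X + 16

section Graeffe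

variable {R : Type*} [CommRing R]

theorem expand_two_prod_X_sub_C_sq (s : Multiset R) :
    expand R 2 (s.map fun a => X - C (a ^ 2)).prod =
      (-1) ^ Multiset.card s * (s.map fun a => X - C a).prod *
        ((s.map fun a => X - C a).prod).comp (-X) := by
  induction s using Multiset.induction_on with
  | empty => simp
  | cons a s ih =>
    rw [Multiset.map_cons, Multiset.prod_cons, map_mul, ih, Multiset.map_cons, Multiset.prod_cons,
      mul_comp, Multiset.card_cons, pow_succ (-1 : R[X])]
    simp only [map_sub, expand_X, expand_C, sub_comp, X_comp, C_comp, map_pow]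
    ring

theorem prod_X_sub_C_sq_eq_of_expand {s : Multiset R} {p q : R[X]}
    (hp : (s.map fun a => X - C a).prod = p)
    (hq : expand R 2 q = (-1) ^ Multiset.card s * p * p.comp (-X)) :
    (s.map fun a => X - C (a ^ 2)).prod = q :=
  expand_injective two_pos (by rw [expand_two_prod_X_sub_C_sq, hp, hq])

end Graeffe

theorem prod_X_sub_C_roots_weilH : (weilH.roots.map fun α => X - C α).prod = weilH := by
  refine ((IsAlgClosed.splits weilH).eq_prod_roots_of_monic ?_).symm
  unfold weilH
  monicity!

theorem card_roots_weilH : Multiset.card weilH.roots = 8 := by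
  rw [IsAlgClosed.card_roots_eq_natDegree]
  unfold weilH
  compute_degree!

theorem prod_X_sub_C_sq_roots_weilH :
    (weilH.roots.map fun α => X - C (α ^ 2)).prod =
      X ^ 8 - 4 * X ^ 6 + 16 * X ^ 4 - 64 * X ^ 2 + 256 := by
  refine prod_X_sub_C_sq_eq_of_expand prod_X_sub_C_roots_weilH ?_
  rw [card_roots_weilH]
  simp only [weilH, map_add, map_sub, map_mul, map_pow, expand_X, map_ofNat,
    add_comp, sub_comp, mul_comp, pow_comp, X_comp, ofNat_comp]
  ring

theorem prod_X_sub_C_pow_four_roots_weilH :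
    (weilH.roots.map fun α => X - C (α ^ 4)).prod =
      (X ^ 4 - 4 * X ^ 3 + 16 * X ^ 2 - 64 * X + 256) ^ 2 := by
  have hsq : ((weilH.roots.map (· ^ 2)).map fun β => X - C β).prod =
      X ^ 8 - 4 * X ^ 6 + 16 * X ^ 4 - 64 * X ^ 2 + 256 := by
    rw [Multiset.map_map]
    exact prod_X_sub_C_sq_roots_weilH
  have h := prod_X_sub_C_sq_eq_of_expand hsq
    (q := (X ^ 4 - 4 * X ^ 3 + 16 * X ^ 2 - 64 * X + 256) ^ 2) (by
      rw [Multiset.card_map, card_roots_weilH]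
      simp only [map_add, map_sub, map_mul, map_pow, expand_X, map_ofNat,
        add_comp, sub_comp, mul_comp, pow_comp, X_comp, ofNat_comp]
      ring)
  simpa only [Multiset.map_map, Function.comp_def, ← pow_mul] using h

theorem irreducible_weilH_pow_four_factor :
    Irreducible (X ^ 4 - 4 * X ^ 3 + 16 * X ^ 2 - 64 * X + 256 : ℚ[X]) := by
  have : Fact (Nat.Prime 5) := ⟨by norm_num⟩
  have : Invertible (-4 : ℚ) := invertibleOfNonzero (by norm_num)
  have hscale : algEquivCMulXAddC (-4 : ℚ) 0 (X ^ 4 - 4 * X ^ 3 + 16 * X ^ 2 - 64 * X + 256) =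
      C 256 * cyclotomic 5 ℚ := by
    simp only [algEquivCMulXAddC_apply, C_0, add_zero, map_add, map_sub, map_mul, map_pow,
      aeval_X, map_ofNat, C_neg, cyclotomic_prime, Finset.sum_range_succ, Finset.sum_range_zero]
    ring
  rw [← MulEquiv.irreducible_iff (algEquivCMulXAddC (-4 : ℚ) 0).toMulEquiv]
  change Irreducible (algEquivCMulXAddC (-4 : ℚ) 0 _)
  rw [hscale, irreducible_isUnit_mul (isUnit_C.mpr (by norm_num))]
  exact cyclotomic.irreducible_rat (by norm_num)

theorem stmt4 :
    (weilH.roots.map (fun α => X - C (α ^ 4))).prod =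
      (X ^ 4 - 4 * X ^ 3 + 16 * X ^ 2 - 64 * X + 256 : Polynomial ℂ) ^ 2 ∧
    Irreducible (X ^ 4 - 4 * X ^ 3 + 16 * X ^ 2 - 64 * X + 256 : Polynomial ℚ) :=
  ⟨prod_X_sub_C_pow_four_roots_weilH, irreducible_weilH_pow_four_factor⟩
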